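/- Let Λ be an invertible d×d real matrix and Σ_a a d×d real matrix with Λ·Σ_a = Σ_a·Λ, and a ∈ ℝ. Define Σ(t) := exp(−2(t−a)·Λ)·Σ_a − (1/2)·exp(−2(t−a)·Λ)·Λ⁻¹·(I − exp(2(t−a)·Λ)). Then Σ(a) = Σ_a and for every t ∈ ℝ, Σ is differentiable at t with derivative Σ′(t) = −Λ·Σ(t) − Σ(t)·Λ + I. -/

import Mathlib

open scoped Matrix
open NormedSpace

attribute [local instance] Matrix.linftyOpNormedAddCommGroup Matrix.linftyOpNormedRing
  Matrix.linftyOpNormedAlgebra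

/-! Since `exp (-2(t-a)Λ)` inverts `exp (2(t-a)Λ)` and commutes with `Λ⁻¹`, the closed form
rewrites as `Σ t = exp (-2(t-a)Λ) (Σ_a - Λ⁻¹/2) + Λ⁻¹/2`. The constant `C = Λ⁻¹/2` solves the
stationary equation `ΛC + CΛ = I`, and the remaining term solves the homogeneous equation
`X' = -ΛX - XΛ` because everything in it commutes with `Λ`. -/

section NormedAlgebra

variable {𝔸 : Type*} [NormedRing 𝔸] [NormedAlgebra ℝ 𝔸] [CompleteSpace 𝔸]

theorem exp_neg_smul_mul_exp_smul (s : ℝ) (x : 𝔸) : exp ((-s) • x) * exp (s • x) = 1 := by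
  have hball (y : 𝔸) : y ∈ Metric.eball 0 (expSeries ℝ 𝔸).radius :=
    (expSeries_radius_eq_top ℝ 𝔸).symm ▸ edist_lt_top _ _
  rw [← exp_add_of_commute_of_mem_ball ((Commute.refl x).smul_left _ |>.smul_right _)
    (hball _) (hball _), ← add_smul, neg_add_cancel, zero_smul, exp_zero]

theorem hasDerivAt_exp_smul_neg_two_mul_sub (x : 𝔸) (a t : ℝ) :
    HasDerivAt (fun t : ℝ => exp ((-(2 * (t - a))) • x))
      ((-2 : ℝ) • (exp ((-(2 * (t - a))) • x) * x)) t := by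
  have hu : HasDerivAt (fun t : ℝ => -(2 * (t - a))) (-2) t := by
    simpa using (((hasDerivAt_id' t).sub_const a).const_mul 2).fun_neg
  exact (hasDerivAt_exp_smul_const x _).scomp t hu

theorem hasDerivAt_lyapunov_of_commute {Λ X C : 𝔸} (hX : Commute Λ X)
    (hC : Λ * C + C * Λ = 1) (a t : ℝ) :
    HasDerivAt (fun t : ℝ => exp ((-(2 * (t - a))) • Λ) * X + C)
      (-(Λ * (exp ((-(2 * (t - a))) • Λ) * X + C)) -
        (exp ((-(2 * (t - a))) • Λ) * X + C) * Λ + 1) t := by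
  set E := exp ((-(2 * (t - a))) • Λ)
  have hE : Λ * E = E * Λ := ((Commute.refl Λ).smul_right _).exp_right.eq
  refine (((hasDerivAt_exp_smul_neg_two_mul_sub Λ a t).mul_const X).add_const C).congr_deriv ?_
  have hEX : E * X * Λ = E * Λ * X := by rw [mul_assoc, ← hX.eq, ← mul_assoc]
  calc (-2 : ℝ) • (E * Λ) * X
      = -(Λ * E * X + E * X * Λ) - (Λ * C + C * Λ) + 1 := by
        rw [hC, hE, hEX, smul_mul_assoc]
        module
    _ = -(Λ * (E * X + C)) - (E * X + C) * Λ + 1 := by noncomm_ring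

end NormedAlgebra

theorem mul_sub_smul_mul_one_sub_eq {𝕜 R : Type*} [CommRing 𝕜] [Ring R] [Algebra 𝕜 R]
    {E G B : R} (hEG : E * G = 1) (hB : Commute B G) (X : R) (c : 𝕜) :
    E * X - c • (E * B * (1 - G)) = E * (X - c • B) + c • B := by
  have hEBG : E * B * G = B := by rw [mul_assoc, hB.eq, ← mul_assoc, hEG, one_mul]
  rw [mul_sub, mul_one, hEBG, mul_sub, mul_smul_comm]
  module

/-- Closed-form covariance of the locally linear controlled SDE: with
`Σ t = exp (-2(t-a) Λ) Σ_a - (1/2) exp (-2(t-a) Λ) Λ⁻¹ (I - exp (2(t-a) Λ))`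
(and `Λ` commuting with `Σ_a`), we have `Σ a = Σ_a` and the Lyapunov ODE
`Σ' t = -Λ Σ t - Σ t Λ + I`. -/
theorem cov_ode_closed_form {d : ℕ} (Λ : Matrix (Fin d) (Fin d) ℝ) (hΛ : IsUnit Λ)
    (Sa : Matrix (Fin d) (Fin d) ℝ) (hcomm : Λ * Sa = Sa * Λ) (a : ℝ)
    (S : ℝ → Matrix (Fin d) (Fin d) ℝ)
    (hS : ∀ t, S t =
      NormedSpace.exp ((-(2 * (t - a))) • Λ) * Sa -
      (1 / 2 : ℝ) • (NormedSpace.exp ((-(2 * (t - a))) • Λ) * Λ⁻¹ *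
        (1 - NormedSpace.exp ((2 * (t - a)) • Λ)))) :
    S a = Sa ∧ ∀ t : ℝ, HasDerivAt S (-(Λ * S t) - S t * Λ + 1) t := by
  have hdet : IsUnit Λ.det := (Matrix.isUnit_iff_isUnit_det Λ).mp hΛ
  have hLi : Λ * Λ⁻¹ = 1 := Matrix.mul_nonsing_inv Λ hdet
  have hiL : Λ⁻¹ * Λ = 1 := Matrix.nonsing_inv_mul Λ hdet
  have hΛΛinv : Commute Λ Λ⁻¹ := hLi.trans hiL.symm
  have hS' : S = fun t => exp ((-(2 * (t - a))) • Λ) * (Sa - (1 / 2 : ℝ) • Λ⁻¹) +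
      (1 / 2 : ℝ) • Λ⁻¹ := by
    funext t
    rw [hS t]
    exact mul_sub_smul_mul_one_sub_eq (exp_neg_smul_mul_exp_smul _ Λ)
      ((hΛΛinv.symm.smul_right _).exp_right) Sa _
  have hC : Λ * ((1 / 2 : ℝ) • Λ⁻¹) + (1 / 2 : ℝ) • Λ⁻¹ * Λ = 1 := by
    rw [mul_smul_comm, smul_mul_assoc, hLi, hiL]
    module
  refine ⟨by simp [hS'], fun t => ?_⟩
  rw [hS']
  exact hasDerivAt_lyapunov_of_commute
    ((show Commute Λ Sa from hcomm).sub_right (hΛΛinv.smul_right _)) hC a t
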